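/- arXiv:2110.09433 — 4 statements merged into one kernel-verified Lean document; each statement's English description precedes it below -/
import Mathlib

section
/- Let c ≥ 0, let α : (−ε, ε) → (0, π/2) and s, t : (−ε, ε) → (0, ∞) be differentiable with s/t constant, and set H an antiderivative of h(α) = (cosα·sinα)^{3/2}. Then the function F(τ) = 2·sin^{5/2}(α(τ))·cos^{1/2}(α(τ))·s(τ)·t(τ) + 5c·(s(τ)t(τ)/(s(τ)²+t(τ)²))·H(α(τ)) is constant in τ if and only if the ODE 5(c+r²)cos²α·s·t·α' − (s²+t²)·s·t·sin²α·α' + 2sinα·cosα·(s²+t²)·(s·t' + t·s') = 0 holds for all τ, where r² = s² + t². -/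
/-!
Since `s / t` is constant, so is the coefficient `s t / (s² + t²)` in front of `H ∘ α`, and
differentiating `F` with `H' = (cos α sin α)^{3/2}` gives
`F' = sin^{3/2} α · cos^{-1/2} α / (s² + t²) · (ODE left-hand side)`.
The factor is positive for `α ∈ (0, π/2)`, so the ODE holds exactly where `F' = 0`, and on an
interval `F' ≡ 0` is equivalent to `F` being constant.
-/

open Real Set

theorem IsOpen.is_const_iff_hasDerivAt_eq_zero {𝕜 G : Type*} [RCLike 𝕜] [NormedAddCommGroup G]
    [NormedSpace 𝕜 G] {s : Set 𝕜} (hs : IsOpen s) (hs' : IsPreconnected s) {f f' : 𝕜 → G}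
    (hf : ∀ x ∈ s, HasDerivAt f (f' x) x) :
    (∀ x ∈ s, ∀ y ∈ s, f x = f y) ↔ ∀ x ∈ s, f' x = 0 := by
  constructor
  · intro hconst x hx
    have hlocal : f =ᶠ[nhds x] fun _ ↦ f x :=
      Filter.eventually_of_mem (hs.mem_nhds hx) fun y hy ↦ hconst y hy x hx
    exact (hf x hx).unique ((hasDerivAt_const x (f x)).congr_of_eventuallyEq hlocal)
  · intro hzero x hx y hy
    refine hs.is_const_of_deriv_eq_zero hs'
      (fun z hz ↦ (hf z hz).differentiableAt.differentiableWithinAt) (fun z hz ↦ ?_) hx hy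
    rw [(hf z hz).deriv, hzero z hz, Pi.zero_apply]

theorem mul_div_sq_add_sq_eq {a b : ℝ} (hb : b ≠ 0) :
    a * b / (a ^ 2 + b ^ 2) = a / b / ((a / b) ^ 2 + 1) := by
  field_simp

theorem Real.sin_pos_and_cos_pos_of_mem_Ioo {x : ℝ} (hx : x ∈ Ioo 0 (π / 2)) :
    0 < sin x ∧ 0 < cos x :=
  ⟨sin_pos_of_pos_of_lt_pi hx.1 (by linarith [hx.2, pi_pos]),
    cos_pos_of_mem_Ioo ⟨by linarith [hx.1, pi_pos], hx.2⟩⟩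

theorem Real.hasDerivAt_sin_rpow_mul_cos_rpow (p q : ℝ) {x : ℝ} (hs : sin x ≠ 0)
    (hc : cos x ≠ 0) :
    HasDerivAt (fun y ↦ sin y ^ p * cos y ^ q)
      (sin x ^ (p - 1) * cos x ^ (q - 1) * (p * cos x ^ 2 - q * sin x ^ 2)) x := by
  have hsin := (hasDerivAt_sin x).rpow_const (p := p) (Or.inl hs)
  have hcos := (hasDerivAt_cos x).rpow_const (p := q) (Or.inl hc)
  refine (hsin.mul hcos).congr_deriv ?_
  rw [rpow_sub_one hs, rpow_sub_one hc]
  field_simp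
  ring

noncomputable def firstIntegral (c : ℝ) (α s t H : ℝ → ℝ) (τ : ℝ) : ℝ :=
  2 * sin (α τ) ^ ((5:ℝ)/2) * cos (α τ) ^ ((1:ℝ)/2) * s τ * t τ
    + 5 * c * (s τ * t τ / (s τ^2 + t τ^2)) * H (α τ)

noncomputable def odeResidual (c : ℝ) (α s t : ℝ → ℝ) (τ : ℝ) : ℝ :=
  5 * (c + (s τ^2 + t τ^2)) * cos (α τ)^2 * (s τ * t τ) * deriv α τ
    - (s τ^2 + t τ^2) * (s τ * t τ) * sin (α τ)^2 * deriv α τ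
    + 2 * sin (α τ) * cos (α τ) * (s τ^2 + t τ^2) * (s τ * deriv t τ + t τ * deriv s τ)

theorem hasDerivAt_firstIntegral {c τ : ℝ} {α s t H : ℝ → ℝ}
    (hS : 0 < sin (α τ)) (hC : 0 < cos (α τ)) (hst : s τ ^ 2 + t τ ^ 2 ≠ 0)
    (hαd : DifferentiableAt ℝ α τ) (hsd : DifferentiableAt ℝ s τ)
    (htd : DifferentiableAt ℝ t τ)
    (hρ : HasDerivAt (fun σ ↦ s σ * t σ / (s σ ^ 2 + t σ ^ 2)) 0 τ)
    (hH : HasDerivAt H ((cos (α τ) * sin (α τ)) ^ ((3:ℝ)/2)) (α τ)) :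
    HasDerivAt (firstIntegral c α s t H)
      (sin (α τ) ^ ((3:ℝ)/2) * cos (α τ) ^ (-(1:ℝ)/2) / (s τ ^ 2 + t τ ^ 2)
        * odeResidual c α s t τ) τ := by
  have hsc := (hasDerivAt_sin_rpow_mul_cos_rpow ((5:ℝ)/2) ((1:ℝ)/2) hS.ne' hC.ne').comp τ
    hαd.hasDerivAt
  have hF := (((hsc.const_mul 2).mul hsd.hasDerivAt).mul htd.hasDerivAt).add
    ((hρ.const_mul (5 * c)).mul (hH.comp τ hαd.hasDerivAt))
  have hform : firstIntegral c α s t H = fun σ ↦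
      2 * (sin (α σ) ^ ((5:ℝ)/2) * cos (α σ) ^ ((1:ℝ)/2)) * s σ * t σ
        + 5 * c * (s σ * t σ / (s σ ^ 2 + t σ ^ 2)) * H (α σ) := by
    funext σ; simp only [firstIntegral]; ring
  rw [hform]
  refine hF.congr_deriv ?_
  have hS52 : sin (α τ) ^ ((5:ℝ)/2) = sin (α τ) ^ ((3:ℝ)/2) * sin (α τ) := by
    rw [← rpow_add_one hS.ne']; norm_num
  have hC12 : cos (α τ) ^ ((1:ℝ)/2) = cos (α τ) ^ (-(1:ℝ)/2) * cos (α τ) := by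
    rw [← rpow_add_one hC.ne']; norm_num
  have hC32 : cos (α τ) ^ ((3:ℝ)/2) = cos (α τ) ^ (-(1:ℝ)/2) * cos (α τ) ^ 2 := by
    rw [← rpow_natCast, ← rpow_add hC]; norm_num
  simp only [Function.comp_apply, Pi.mul_apply]
  rw [mul_rpow hC.le hS.le, hC32, hS52, hC12, show (5:ℝ)/2 - 1 = 3/2 by norm_num,
    show (1:ℝ)/2 - 1 = -1/2 by norm_num]
  simp only [odeResidual]
  field_simp
  ring

theorem first_integral_F_iff_ode_general
    (c ε : ℝ)
    (α s t : ℝ → ℝ) (H : ℝ → ℝ)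
    (hα : ∀ τ ∈ Ioo (-ε) ε, α τ ∈ Ioo 0 (π/2))
    (ht : ∀ τ ∈ Ioo (-ε) ε, 0 < t τ)
    (hαd : ∀ τ ∈ Ioo (-ε) ε, DifferentiableAt ℝ α τ)
    (hsd : ∀ τ ∈ Ioo (-ε) ε, DifferentiableAt ℝ s τ)
    (htd : ∀ τ ∈ Ioo (-ε) ε, DifferentiableAt ℝ t τ)
    (hratio : ∀ τ₁ ∈ Ioo (-ε) ε, ∀ τ₂ ∈ Ioo (-ε) ε, s τ₁ / t τ₁ = s τ₂ / t τ₂)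
    (hH : ∀ x ∈ Ioo 0 (π/2), HasDerivAt H ((cos x * sin x) ^ ((3:ℝ)/2)) x) :
    (∀ τ₁ ∈ Ioo (-ε) ε, ∀ τ₂ ∈ Ioo (-ε) ε,
      2 * sin (α τ₁) ^ ((5:ℝ)/2) * cos (α τ₁) ^ ((1:ℝ)/2) * s τ₁ * t τ₁
        + 5 * c * (s τ₁ * t τ₁ / (s τ₁^2 + t τ₁^2)) * H (α τ₁)
      = 2 * sin (α τ₂) ^ ((5:ℝ)/2) * cos (α τ₂) ^ ((1:ℝ)/2) * s τ₂ * t τ₂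
        + 5 * c * (s τ₂ * t τ₂ / (s τ₂^2 + t τ₂^2)) * H (α τ₂))
    ↔
    (∀ τ ∈ Ioo (-ε) ε,
      5 * (c + (s τ^2 + t τ^2)) * cos (α τ)^2 * (s τ * t τ) * deriv α τ
        - (s τ^2 + t τ^2) * (s τ * t τ) * sin (α τ)^2 * deriv α τ
        + 2 * sin (α τ) * cos (α τ) * (s τ^2 + t τ^2)
          * (s τ * deriv t τ + t τ * deriv s τ) = 0) := by
  have hρ : ∀ τ ∈ Ioo (-ε) ε, HasDerivAt (fun σ ↦ s σ * t σ / (s σ ^ 2 + t σ ^ 2)) 0 τ :=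
    fun τ hτ ↦ (hasDerivAt_const τ (s τ * t τ / (s τ ^ 2 + t τ ^ 2))).congr_of_eventuallyEq <|
      Filter.eventually_of_mem (isOpen_Ioo.mem_nhds hτ) fun σ hσ ↦ by
        dsimp only
        rw [mul_div_sq_add_sq_eq (ht σ hσ).ne', mul_div_sq_add_sq_eq (ht τ hτ).ne',
          hratio σ hσ τ hτ]
  have hderiv : ∀ τ ∈ Ioo (-ε) ε, HasDerivAt (firstIntegral c α s t H)
      (sin (α τ) ^ ((3:ℝ)/2) * cos (α τ) ^ (-(1:ℝ)/2) / (s τ ^ 2 + t τ ^ 2)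
        * odeResidual c α s t τ) τ := fun τ hτ ↦
    have ⟨hS, hC⟩ := sin_pos_and_cos_pos_of_mem_Ioo (hα τ hτ)
    hasDerivAt_firstIntegral hS hC (by have := ht τ hτ; positivity) (hαd τ hτ) (hsd τ hτ)
      (htd τ hτ) (hρ τ hτ) (hH _ (hα τ hτ))
  refine (isOpen_Ioo.is_const_iff_hasDerivAt_eq_zero isPreconnected_Ioo hderiv).trans <|
    forall₂_congr fun τ hτ ↦ mul_eq_zero_iff_left ?_
  have ⟨hS, hC⟩ := sin_pos_and_cos_pos_of_mem_Ioo (hα τ hτ)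
  have := ht τ hτ
  positivity

theorem first_integral_F_iff_ode
    (c ε : ℝ) (hc : 0 ≤ c) (hε : 0 < ε)
    (α s t : ℝ → ℝ) (H : ℝ → ℝ)
    (hα : ∀ τ ∈ Ioo (-ε) ε, α τ ∈ Ioo 0 (π/2))
    (hs : ∀ τ ∈ Ioo (-ε) ε, 0 < s τ)
    (ht : ∀ τ ∈ Ioo (-ε) ε, 0 < t τ)
    (hαd : ∀ τ ∈ Ioo (-ε) ε, DifferentiableAt ℝ α τ)
    (hsd : ∀ τ ∈ Ioo (-ε) ε, DifferentiableAt ℝ s τ)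
    (htd : ∀ τ ∈ Ioo (-ε) ε, DifferentiableAt ℝ t τ)
    (hratio : ∀ τ₁ ∈ Ioo (-ε) ε, ∀ τ₂ ∈ Ioo (-ε) ε, s τ₁ / t τ₁ = s τ₂ / t τ₂)
    (hH : ∀ x ∈ Ioo 0 (π/2), HasDerivAt H ((cos x * sin x) ^ ((3:ℝ)/2)) x) :
    (∀ τ₁ ∈ Ioo (-ε) ε, ∀ τ₂ ∈ Ioo (-ε) ε,
      2 * sin (α τ₁) ^ ((5:ℝ)/2) * cos (α τ₁) ^ ((1:ℝ)/2) * s τ₁ * t τ₁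
        + 5 * c * (s τ₁ * t τ₁ / (s τ₁^2 + t τ₁^2)) * H (α τ₁)
      = 2 * sin (α τ₂) ^ ((5:ℝ)/2) * cos (α τ₂) ^ ((1:ℝ)/2) * s τ₂ * t τ₂
        + 5 * c * (s τ₂ * t τ₂ / (s τ₂^2 + t τ₂^2)) * H (α τ₂))
    ↔
    (∀ τ ∈ Ioo (-ε) ε,
      5 * (c + (s τ^2 + t τ^2)) * cos (α τ)^2 * (s τ * t τ) * deriv α τ
        - (s τ^2 + t τ^2) * (s τ * t τ) * sin (α τ)^2 * deriv α τ
        + 2 * sin (α τ) * cos (α τ) * (s τ^2 + t τ^2)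
          * (s τ * deriv t τ + t τ * deriv s τ) = 0) :=
  first_integral_F_iff_ode_general c ε α s t H hα ht hαd hsd htd hratio hH
end

section
/- Let c ≥ 0 and define f₁(α, r) = cosα·(−f·cos²α + 3l²·g·r²) where l = (sinα − 1)/2, f = 5(c + r²)^{3/5}, g = 4(c + r²)^{−2/5}. Then for α ∈ (−π/2, π/2) and r > 0, f₁(α, r) > 0 if and only if sinα < −(2r² + 5c)/(8r² + 5c), i.e. α < α_c(r) := arcsin(−(2r²+5c)/(8r²+5c)); and f₁(α_c(r), r) = 0. -/
open Real Set

theorem f1_sign_analysis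
    (c : ℝ) (hc : 0 ≤ c)
    (f₁ : ℝ → ℝ → ℝ)
    (hf₁ : ∀ α r, f₁ α r =
      cos α * (-(5 * (c + r^2) ^ ((3:ℝ)/5)) * cos α ^ 2
        + 3 * ((sin α - 1)/2)^2 * (4 * (c + r^2) ^ (-(2:ℝ)/5)) * r^2)) :
    ∀ r : ℝ, 0 < r → ∀ α ∈ Ioo (-(π/2)) (π/2),
      (0 < f₁ α r ↔ sin α < -((2*r^2 + 5*c)/(8*r^2 + 5*c))) ∧
      (0 < f₁ α r ↔ α < Real.arcsin (-((2*r^2 + 5*c)/(8*r^2 + 5*c)))) ∧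
      f₁ (Real.arcsin (-((2*r^2 + 5*c)/(8*r^2 + 5*c)))) r = 0 := by
  intro r hr α hα
  have hA : (0:ℝ) < c + r ^ 2 := by positivity
  have hD : (0:ℝ) < 8 * r ^ 2 + 5 * c := by positivity
  have hN : (0:ℝ) < 2 * r ^ 2 + 5 * c := by positivity
  set t : ℝ := -((2*r^2 + 5*c)/(8*r^2 + 5*c)) with ht
  have ht1 : -1 ≤ t := by
    rw [ht, neg_le, neg_neg, div_le_one hD]; nlinarith
  have ht2 : t ≤ 1 := by
    rw [ht]
    have : 0 < (2*r^2 + 5*c)/(8*r^2 + 5*c) := div_pos hN hD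
    linarith
  have htD : t * (8*r^2 + 5*c) = -(2*r^2 + 5*c) := by
    rw [ht]; field_simp
  -- key factorization
  have key : ∀ β : ℝ, f₁ β r =
      cos β * (c + r ^ 2) ^ (-(2:ℝ)/5) *
        ((1 - sin β) * (-(2*r^2 + 5*c) - sin β * (8*r^2 + 5*c))) := by
    intro β
    rw [hf₁, cos_sq']
    have h3 : (c + r ^ 2) ^ ((3:ℝ)/5) = (c + r ^ 2) ^ (-(2:ℝ)/5) * (c + r ^ 2) := by
      rw [show ((3:ℝ)/5) = -(2:ℝ)/5 + 1 by norm_num, Real.rpow_add hA, Real.rpow_one]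
    rw [h3]
    ring
  have hcos : 0 < cos α := Real.cos_pos_of_mem_Ioo hα
  have hrp : 0 < (c + r ^ 2) ^ (-(2:ℝ)/5) := Real.rpow_pos_of_pos hA _
  have hs1 : sin α < 1 := by
    have := Real.strictMonoOn_sin ⟨hα.1.le, hα.2.le⟩
      ⟨by linarith [pi_pos], le_refl (π/2)⟩ hα.2
    simpa using this
  have hP : 0 < cos α * (c + r ^ 2) ^ (-(2:ℝ)/5) * (1 - sin α) :=
    mul_pos (mul_pos hcos hrp) (by linarith)
  have hmain : 0 < f₁ α r ↔ sin α < t := by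
    rw [key α, show cos α * (c + r ^ 2) ^ (-(2:ℝ)/5) *
        ((1 - sin α) * (-(2*r^2 + 5*c) - sin α * (8*r^2 + 5*c)))
      = cos α * (c + r ^ 2) ^ (-(2:ℝ)/5) * (1 - sin α) *
        (-(2*r^2 + 5*c) - sin α * (8*r^2 + 5*c)) by ring]
    constructor
    · intro h
      by_contra hle
      push_neg at hle
      have hE : -(2*r^2 + 5*c) - sin α * (8*r^2 + 5*c) ≤ 0 := by
        have := mul_le_mul_of_nonneg_right hle hD.le
        linarith [htD]
      have := mul_nonpos_of_nonneg_of_nonpos hP.le hE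
      linarith
    · intro h
      have hE : 0 < -(2*r^2 + 5*c) - sin α * (8*r^2 + 5*c) := by
        have := mul_lt_mul_of_pos_right h hD
        linarith [htD]
      exact mul_pos hP hE
  refine ⟨hmain, ?_, ?_⟩
  · rw [hmain]
    have hmem : Real.arcsin t ∈ Icc (-(π/2)) (π/2) :=
      ⟨Real.neg_pi_div_two_le_arcsin t, Real.arcsin_le_pi_div_two t⟩
    constructor
    · intro h
      have : sin α < sin (Real.arcsin t) := by rwa [Real.sin_arcsin ht1 ht2]
      exact (Real.strictMonoOn_sin.lt_iff_lt ⟨hα.1.le, hα.2.le⟩ hmem).mp this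
    · intro h
      have := Real.strictMonoOn_sin ⟨hα.1.le, hα.2.le⟩ hmem h
      rwa [Real.sin_arcsin ht1 ht2] at this
  · rw [key, Real.sin_arcsin ht1 ht2]
    have hz : -(2*r^2 + 5*c) - t * (8*r^2 + 5*c) = 0 := by linarith [htD]
    rw [hz]
    ring
end

section
/- Let c ≥ 0 and define f₂(α, r) = l·(l²·g·r² − 3f·cos²α)·r where l = (sinα − 1)/2, f = 5(c + r²)^{3/5}, g = 4(c + r²)^{−2/5}. Then for α ∈ (−π/2, π/2) and r > 0, f₂(α, r) > 0 if and only if sinα > −(14r² + 15c)/(16r² + 15c), i.e. α > β_c(r) := arcsin(−(14r²+15c)/(16r²+15c)); and f₂(β_c(r), r) = 0. -/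
open Real Set

theorem f2_sign_analysis
    (c : ℝ) (hc : 0 ≤ c)
    (f₂ : ℝ → ℝ → ℝ)
    (hf₂ : ∀ α r, f₂ α r =
      ((sin α - 1)/2) * (((sin α - 1)/2)^2 * (4 * (c + r^2) ^ (-(2:ℝ)/5)) * r^2
        - 3 * (5 * (c + r^2) ^ ((3:ℝ)/5)) * cos α ^ 2) * r) :
    ∀ r : ℝ, 0 < r → ∀ α ∈ Ioo (-(π/2)) (π/2),
      (0 < f₂ α r ↔ -((14*r^2 + 15*c)/(16*r^2 + 15*c)) < sin α) ∧
      (0 < f₂ α r ↔ Real.arcsin (-((14*r^2 + 15*c)/(16*r^2 + 15*c))) < α) ∧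
      f₂ (Real.arcsin (-((14*r^2 + 15*c)/(16*r^2 + 15*c)))) r = 0 := by
  intro r hr α hα
  have hcr : (0:ℝ) < c + r^2 := by positivity
  have hA : (0:ℝ) < (c + r^2) ^ (-(2:ℝ)/5) := Real.rpow_pos_of_pos hcr _
  have hB : (c + r^2) ^ ((3:ℝ)/5) = (c + r^2) * (c + r^2) ^ (-(2:ℝ)/5) := by
    rw [← Real.rpow_one_add' hcr.le (by norm_num)]
    norm_num
  have hD : (0:ℝ) < 16*r^2 + 15*c := by positivity
  have hN : (0:ℝ) < 14*r^2 + 15*c := by positivity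
  set x : ℝ := -((14*r^2 + 15*c)/(16*r^2 + 15*c)) with hx
  have hx1 : -1 < x := by
    rw [hx, neg_lt, neg_neg, div_lt_one hD]; nlinarith
  have hx0 : x ≤ 1 := by
    rw [hx]; nlinarith [div_pos hN hD]
  -- general factorization
  have key : ∀ s C : ℝ, C = 1 - s^2 →
      ((s - 1)/2) * (((s - 1)/2)^2 * (4 * (c + r^2) ^ (-(2:ℝ)/5)) * r^2
        - 3 * (5 * (c + r^2) ^ ((3:ℝ)/5)) * C) * r
      = (1-s)^2/2 * ((c + r^2) ^ (-(2:ℝ)/5)) * r * ((14*r^2 + 15*c) + s*(16*r^2 + 15*c)) := by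
    intro s C hC
    rw [hB, hC]; ring
  have hcos : 0 < cos α := Real.cos_pos_of_mem_Ioo hα
  have hs1 : sin α < 1 := by nlinarith [sin_sq_add_cos_sq α]
  have hfact : f₂ α r = (1-sin α)^2/2 * ((c + r^2) ^ (-(2:ℝ)/5)) * r
      * ((14*r^2 + 15*c) + sin α*(16*r^2 + 15*c)) := by
    rw [hf₂]; exact key _ _ (by nlinarith [sin_sq_add_cos_sq α])
  have hpos : 0 < (1-sin α)^2/2 * ((c + r^2) ^ (-(2:ℝ)/5)) * r := by
    have h0 : (0:ℝ) < (1-sin α)^2/2 := by nlinarith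
    exact mul_pos (mul_pos h0 hA) hr
  have h1 : 0 < f₂ α r ↔ x < sin α := by
    rw [hfact]
    constructor
    · intro h
      have h2 : 0 < (14*r^2 + 15*c) + sin α*(16*r^2 + 15*c) := by
        by_contra hle
        push_neg at hle
        nlinarith
      rw [hx, neg_lt, lt_div_iff₀ hD]
      nlinarith
    · intro h
      rw [hx, neg_lt, lt_div_iff₀ hD] at h
      have : 0 < (14*r^2 + 15*c) + sin α*(16*r^2 + 15*c) := by nlinarith
      exact mul_pos hpos this
  refine ⟨h1, ?_, ?_⟩
  · rw [h1]
    exact (Real.arcsin_lt_iff_lt_sin ⟨le_of_lt hx1, hx0⟩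
      ⟨le_of_lt hα.1, le_of_lt hα.2⟩).symm
  · have hsin : sin (arcsin x) = x := Real.sin_arcsin (le_of_lt hx1) hx0
    rw [hf₂]
    have := key (sin (arcsin x)) (cos (arcsin x) ^ 2)
      (by nlinarith [sin_sq_add_cos_sq (arcsin x)])
    have hz : (14*r^2 + 15*c) + x*(16*r^2 + 15*c) = 0 := by
      rw [hx]; field_simp; ring
    rw [this, hsin, hz, mul_zero]
end

section
/- For c ≥ 0, with f₁, f₂ as defined by f₁ = cosα(−f cos²α + 3l²gr²), f₂ = l(l²gr² − 3f cos²α)r, l = (sinα−1)/2, f = 5(c+r²)^{3/5}, g = 4(c+r²)^{−2/5}, and r > 0 fixed, the ratio f₂(α, r)/f₁(α, r) tends to 0 as α → (π/2)⁻. -/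
open Real Filter Topology

theorem f2_over_f1_tendsto_zero
    (c r : ℝ) (hc : 0 ≤ c) (hr : 0 < r) :
    Tendsto (fun α : ℝ =>
        (((sin α - 1)/2) * (((sin α - 1)/2)^2 * (4 * (c + r^2) ^ (-(2:ℝ)/5)) * r^2
            - 3 * (5 * (c + r^2) ^ ((3:ℝ)/5)) * cos α ^ 2) * r)
        /
        (cos α * (-(5 * (c + r^2) ^ ((3:ℝ)/5)) * cos α ^ 2
            + 3 * ((sin α - 1)/2)^2 * (4 * (c + r^2) ^ (-(2:ℝ)/5)) * r^2)))
      (nhdsWithin (π/2) (Set.Iio (π/2))) (nhds 0) := by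
  have hcr : (0:ℝ) < c + r^2 := by positivity
  set f : ℝ := 5 * (c + r^2) ^ ((3:ℝ)/5) with hf
  set g : ℝ := 4 * (c + r^2) ^ (-(2:ℝ)/5) with hg
  have hfpos : 0 < f := by
    have := Real.rpow_pos_of_pos hcr ((3:ℝ)/5); simp [hf]; positivity
  set A : ℝ → ℝ := fun α => (-(1/(2*(1+sin α)))) *
      ((cos α)^2 * g * r^2/(4*(1+sin α)^2) - 3*f) * r with hA
  set B : ℝ → ℝ := fun α => -f + 3 * (cos α)^2 * g * r^2 / (4*(1+sin α)^2) with hB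
  have key : Tendsto (fun α => cos α * (A α / B α))
      (nhdsWithin (π/2) (Set.Iio (π/2))) (nhds 0) := by
    have hcos : Tendsto cos (nhdsWithin (π/2) (Set.Iio (π/2))) (nhds 0) := by
      have := (Real.continuous_cos.continuousAt (x := π/2)).tendsto
      rw [Real.cos_pi_div_two] at this
      exact this.mono_left nhdsWithin_le_nhds
    have hAB : Tendsto (fun α => A α / B α) (nhdsWithin (π/2) (Set.Iio (π/2)))
        (nhds (A (π/2) / B (π/2))) := by
      have hBcont : ContinuousAt B (π/2) := by
        apply ContinuousAt.add continuousAt_const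
        apply ContinuousAt.div
        · fun_prop
        · fun_prop
        · norm_num [Real.sin_pi_div_two]
      have hAcont : ContinuousAt A (π/2) := by
        apply ContinuousAt.mul _ continuousAt_const
        apply ContinuousAt.mul
        · apply ContinuousAt.neg
          apply ContinuousAt.div continuousAt_const (by fun_prop)
          norm_num [Real.sin_pi_div_two]
        · apply ContinuousAt.sub _ continuousAt_const
          apply ContinuousAt.div (by fun_prop) (by fun_prop)
          norm_num [Real.sin_pi_div_two]
      have hBne : B (π/2) ≠ 0 := by
        simp only [hB, Real.cos_pi_div_two, Real.sin_pi_div_two]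
        norm_num
        try linarith
      exact ((hAcont.div hBcont hBne).tendsto).mono_left nhdsWithin_le_nhds
    have := hcos.mul hAB
    simpa using this
  refine Filter.Tendsto.congr' ?_ key
  have hmem : Set.Ioo (π/2 - 1) (π/2) ∈ nhdsWithin (π/2) (Set.Iio (π/2)) := by
    apply Ioo_mem_nhdsLT_of_mem
    exact ⟨by linarith, le_rfl⟩
  filter_upwards [hmem] with α hα
  have h0 : 0 < α := by
    have : (1:ℝ) < π/2 := by linarith [Real.pi_gt_three]
    linarith [hα.1]
  have hsin : 0 < sin α := Real.sin_pos_of_pos_of_lt_pi h0 (by linarith [hα.2, Real.pi_pos])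
  have hcos : 0 < cos α := Real.cos_pos_of_mem_Ioo ⟨by linarith [hα.1, Real.pi_pos], hα.2⟩
  have hs1 : (1:ℝ) + sin α ≠ 0 := by linarith
  have hpyth := Real.sin_sq_add_cos_sq α
  have hl : (sin α - 1)/2 = -((cos α)^2/(2*(1+sin α))) := by
    field_simp
    nlinarith [hpyth]
  have hNum : ((sin α - 1)/2) * (((sin α - 1)/2)^2 * g * r^2
      - 3 * f * cos α ^ 2) * r = (cos α)^4 * A α := by
    simp only [hA]
    rw [hl]
    field_simp
    ring
  have hDen : cos α * (-f * cos α ^ 2 + 3 * ((sin α - 1)/2)^2 * g * r^2)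
      = (cos α)^3 * B α := by
    simp only [hB]
    rw [hl]
    field_simp
    ring
  have hcne : cos α ≠ 0 := ne_of_gt hcos
  calc cos α * (A α / B α) = (cos α)^3 * ((cos α) * A α) / ((cos α)^3 * B α) := by
        rw [mul_div_mul_left _ _ (by positivity : (cos α)^3 ≠ 0), mul_div_assoc]
        simp only [hA]; ring
    _ = _ := by rw [← hDen]; congr 1; rw [hNum]; ring
end
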